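/- arXiv:1610.08217 — 3 statements merged into one kernel-verified Lean document; each statement's English description precedes it below -/
import Mathlib

section
/- (Theorem 1(iii)) Let ℓ ≥ 3 and suppose G has no simple cycle of length exactly ℓ. Then ρ(B^(ℓ−2)) = ρ(B^(ℓ−1)). -/
open Matrix ENNReal

namespace PercNB

variable {V : Type*} [Fintype V] [DecidableEq V]

/-- `p : Fin (g+1) → V` is a length-`g` directed path in the simple graph `G`:
`g+1` pairwise distinct vertices with consecutive vertices adjacent. -/
def IsDiPath (G : SimpleGraph V) (g : ℕ) (p : Fin (g+1) → V) : Prop :=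
  Function.Injective p ∧ ∀ k : Fin g, G.Adj (p k.castSucc) (p k.succ)

instance (G : SimpleGraph V) [DecidableRel G.Adj] (g : ℕ) :
    DecidablePred (IsDiPath G g) := fun p =>
  inferInstanceAs (Decidable (Function.Injective p ∧ ∀ k : Fin g, G.Adj (p k.castSucc) (p k.succ)))

/-- The type of length-`g` directed paths of `G`. -/
abbrev DiPath (G : SimpleGraph V) (g : ℕ) := {p : Fin (g+1) → V // IsDiPath G g p}

/-- The `g`-th-order non-backtracking matrix `B^(g)` of `G`, indexed by the length-`g`
directed paths of `G`: the `(p, q)` entry is `1` if `q k = p (k+1)` for `1 ≤ k ≤ g` and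
`(p 1, …, p (g+1), q (g+1))` is a length-`(g+1)` directed path, and `0` otherwise. -/
def NBM (G : SimpleGraph V) [DecidableRel G.Adj] (g : ℕ) :
    Matrix (DiPath G g) (DiPath G g) ℂ := fun p q =>
  if (∀ k : Fin g, q.1 k.castSucc = p.1 k.succ) ∧
      IsDiPath G (g+1) (Fin.snoc p.1 (q.1 (Fin.last g))) then 1 else 0

/-- The spectral radius of a finite square complex matrix:
the maximum modulus of its eigenvalues (`0` if the index type is empty). -/
noncomputable def specRad {n : Type*} [Fintype n] [DecidableEq n] (X : Matrix n n ℂ) : ℝ≥0∞ :=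
  spectralRadius ℂ X

/-- `c : Fin k → V` is a simple cycle of length `k ≥ 3` in `G`: pairwise distinct vertices
with `c t` adjacent to `c (t+1)` for `1 ≤ t ≤ k-1` and `c k` adjacent to `c 1`. -/
def IsSimpleCycle (G : SimpleGraph V) (k : ℕ) (c : Fin k → V) : Prop :=
  3 ≤ k ∧ Function.Injective c ∧
    ∀ t : Fin k, G.Adj (c t) (c ⟨(t.val + 1) % k, Nat.mod_lt _ t.pos⟩)

/-- The arc relation of the digraph `G^(g)` on the length-`g` directed paths of `G`:
`p → q` exactly when `B^(g)_{p,q} = 1`. -/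
def NBArc (G : SimpleGraph V) (g : ℕ) (p q : DiPath G g) : Prop :=
  (∀ k : Fin g, q.1 k.castSucc = p.1 k.succ) ∧
    IsDiPath G (g+1) (Fin.snoc p.1 (q.1 (Fin.last g)))

/-- The arc relation of the line digraph `L(G^(g-1))` (for `g ≥ 1`), under the identification
of its vertices — the arcs `(i₁,…,i_g) → (i₂,…,i_{g+1})` of `G^(g-1)` — with the length-`g`
directed paths `(i₁,…,i_{g+1})` of `G`: there is an arc `p → q` exactly when the arc
corresponding to `p` ends at the tail of the arc corresponding to `q`, i.e. when
`q k = p (k+1)` for `1 ≤ k ≤ g`. -/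
def LineArc (G : SimpleGraph V) (g : ℕ) (p q : DiPath G g) : Prop :=
  ∀ k : Fin g, q.1 k.castSucc = p.1 k.succ

/-- `c : Fin k → α` is a directed cycle of length `k` with respect to the arc relation `r`:
`k` pairwise distinct vertices with an arc from each to the cyclically next one. -/
def IsDiCycle {α : Type*} (r : α → α → Prop) (k : ℕ) (c : Fin k → α) : Prop :=
  Function.Injective c ∧ ∀ t : Fin k, r (c t) (c ⟨(t.val + 1) % k, Nat.mod_lt _ t.pos⟩)

/-- The type of directed edges of `G`: ordered pairs of adjacent vertices. -/
abbrev DiEdge (G : SimpleGraph V) := {e : V × V // G.Adj e.1 e.2}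

/-- The standard non-backtracking matrix `B = B^(1)`, indexed by directed edges:
`B_{(i,j),(k,l)} = 1` iff `j = k`, `l ≠ i` and `j` is adjacent to `l`. -/
def Bmat (G : SimpleGraph V) [DecidableRel G.Adj] : Matrix (DiEdge G) (DiEdge G) ℂ :=
  fun e f => if e.1.2 = f.1.1 ∧ f.1.2 ≠ e.1.1 ∧ G.Adj e.1.2 f.1.2 then 1 else 0

/-- `(ΔB₁)_{(i,j),(k,l)} = 1` iff `B_{(i,j),(k,l)} = 1` and `i` is adjacent to `l`. -/
def dB1 (G : SimpleGraph V) [DecidableRel G.Adj] : Matrix (DiEdge G) (DiEdge G) ℂ :=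
  fun e f => if (e.1.2 = f.1.1 ∧ f.1.2 ≠ e.1.1 ∧ G.Adj e.1.2 f.1.2) ∧ G.Adj e.1.1 f.1.2
    then 1 else 0

/-- `(ΔB₂)_{(i,j),(k,l)} = 1` iff `l = i` and `j` is adjacent to `k`. -/
def dB2 (G : SimpleGraph V) [DecidableRel G.Adj] : Matrix (DiEdge G) (DiEdge G) ℂ :=
  fun e f => if f.1.2 = e.1.1 ∧ G.Adj e.1.2 f.1.1 then 1 else 0

/-- The diagonal matrix `D_Δ` whose `((i,j),(i,j))` entry is the number of common
neighbours of `i` and `j`. -/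
noncomputable def Ddel (G : SimpleGraph V) [DecidableRel G.Adj] :
    Matrix (DiEdge G) (DiEdge G) ℂ :=
  Matrix.diagonal fun e =>
    ((Finset.univ.filter fun v => G.Adj e.1.1 v ∧ G.Adj e.1.2 v).card : ℂ)

/-- The `8E × 8E` block matrix
`M = [[B, −ΔB₂, D_Δ − I, B − ΔB₁], [I, 0, 0, 0], [0, I, 0, 0], [0, 0, I, 0]]`. -/
noncomputable def Mmat (G : SimpleGraph V) [DecidableRel G.Adj] :
    Matrix ((DiEdge G ⊕ DiEdge G) ⊕ (DiEdge G ⊕ DiEdge G))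
      ((DiEdge G ⊕ DiEdge G) ⊕ (DiEdge G ⊕ DiEdge G)) ℂ :=
  Matrix.fromBlocks
    (Matrix.fromBlocks (Bmat G) (-(dB2 G)) 1 0)
    (Matrix.fromBlocks (Ddel G - 1) (Bmat G - dB1 G) 0 0)
    (Matrix.fromBlocks 0 1 0 0)
    (Matrix.fromBlocks 0 0 1 0)

/-- `x_{(i,j)} = Σ_k ψ_{(i,j,k)}`, the sum over all vertices `k` adjacent to `j` with
`k ≠ i`; equivalently, the sum of `ψ` over all length-2 directed paths starting `(i,j,·)`. -/
noncomputable def xvec (G : SimpleGraph V) [DecidableRel G.Adj] (ψ : DiPath G 2 → ℂ) :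
    DiEdge G → ℂ := fun e =>
  ∑ p ∈ Finset.univ.filter (fun p : DiPath G 2 => p.1 0 = e.1.1 ∧ p.1 1 = e.1.2), ψ p

/-- `y_{(i,j)} = Σ_k ψ_{(i,j,k)}`, the sum over all vertices `k` adjacent to both `i`
and `j`. -/
noncomputable def yvec (G : SimpleGraph V) [DecidableRel G.Adj] (ψ : DiPath G 2 → ℂ) :
    DiEdge G → ℂ := fun e =>
  ∑ p ∈ Finset.univ.filter
    (fun p : DiPath G 2 => p.1 0 = e.1.1 ∧ p.1 1 = e.1.2 ∧ G.Adj e.1.1 (p.1 2)), ψ p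

/-- The block vector `z = (x, λ⁻¹x, λ⁻²x, λ⁻³x)`. -/
noncomputable def blockVec {G : SimpleGraph V} (lam : ℂ) (x : DiEdge G → ℂ) :
    (DiEdge G ⊕ DiEdge G) ⊕ (DiEdge G ⊕ DiEdge G) → ℂ :=
  Sum.elim (Sum.elim x (lam⁻¹ • x)) (Sum.elim ((lam ^ 2)⁻¹ • x) ((lam ^ 3)⁻¹ • x))

/-- The vector `ψ` built from `x`:
`ψ_{(i,j,k)} = (λ²x_{(j,k)} − λx_{(k,i)} + x_{(i,j)})/(λ³+1)` if `i` and `k` are adjacent,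
and `ψ_{(i,j,k)} = λ⁻¹ x_{(j,k)}` if `i` and `k` are not adjacent. -/
noncomputable def psiOf (G : SimpleGraph V) [DecidableRel G.Adj] (lam : ℂ)
    (x : DiEdge G → ℂ) : DiPath G 2 → ℂ := fun p =>
  if h : G.Adj (p.1 0) (p.1 2) then
    (lam ^ 2 * x ⟨(p.1 1, p.1 2), by simpa using p.2.2 1⟩
      - lam * x ⟨(p.1 2, p.1 0), h.symm⟩
      + x ⟨(p.1 0, p.1 1), by simpa using p.2.2 0⟩) / (lam ^ 3 + 1)
  else lam⁻¹ * x ⟨(p.1 1, p.1 2), by simpa using p.2.2 1⟩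

/- ===== auxiliary lemmas ===== -/

section Spectral

lemma mem_spectrum_iff_exists_eigvec {n : Type*} [Fintype n] [DecidableEq n]
    (M : Matrix n n ℂ) (z : ℂ) :
    z ∈ spectrum ℂ M ↔ ∃ v, v ≠ 0 ∧ M.mulVec v = z • v := by
  rw [spectrum.mem_iff, Matrix.isUnit_iff_isUnit_det, isUnit_iff_ne_zero, not_not,
    ← Matrix.exists_mulVec_eq_zero_iff]
  constructor
  · rintro ⟨v, hv, h⟩
    refine ⟨v, hv, ?_⟩
    rw [Matrix.sub_mulVec, Algebra.algebraMap_eq_smul_one, Matrix.smul_mulVec,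
      Matrix.one_mulVec, sub_eq_zero] at h
    exact h.symm
  · rintro ⟨v, hv, h⟩
    exact ⟨v, hv, by
      rw [Matrix.sub_mulVec, Algebra.algebraMap_eq_smul_one, Matrix.smul_mulVec,
        Matrix.one_mulVec, h, sub_self]⟩

lemma mem_spectrum_mul_comm {m n : Type*} [Fintype m] [DecidableEq m] [Fintype n]
    [DecidableEq n] (A : Matrix m n ℂ) (B : Matrix n m ℂ) {z : ℂ} (hz : z ≠ 0)
    (h : z ∈ spectrum ℂ (A * B)) : z ∈ spectrum ℂ (B * A) := by
  rw [mem_spectrum_iff_exists_eigvec] at h ⊢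
  obtain ⟨v, hv, h⟩ := h
  refine ⟨B.mulVec v, ?_, ?_⟩
  · intro h0
    have h1 : (A * B).mulVec v = 0 := by
      rw [← Matrix.mulVec_mulVec, h0, Matrix.mulVec_zero]
    rw [h] at h1
    exact hv (by simpa [hz] using h1)
  · rw [Matrix.mulVec_mulVec, Matrix.mul_assoc, ← Matrix.mulVec_mulVec, h, Matrix.mulVec_smul]

lemma spectralRadius_mul_comm_le {m n : Type*} [Fintype m] [DecidableEq m] [Fintype n]
    [DecidableEq n] (A : Matrix m n ℂ) (B : Matrix n m ℂ) :
    spectralRadius ℂ (A * B) ≤ spectralRadius ℂ (B * A) := by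
  show (⨆ z ∈ spectrum ℂ (A * B), (‖z‖₊ : ℝ≥0∞)) ≤ ⨆ z ∈ spectrum ℂ (B * A), (‖z‖₊ : ℝ≥0∞)
  refine iSup₂_le fun z hz => ?_
  rcases eq_or_ne z 0 with rfl | h0
  · simp
  · exact le_iSup₂_of_le z (mem_spectrum_mul_comm A B h0 hz) le_rfl

lemma spectralRadius_mul_comm {m n : Type*} [Fintype m] [DecidableEq m] [Fintype n]
    [DecidableEq n] (A : Matrix m n ℂ) (B : Matrix n m ℂ) :
    spectralRadius ℂ (A * B) = spectralRadius ℂ (B * A) :=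
  le_antisymm (spectralRadius_mul_comm_le A B) (spectralRadius_mul_comm_le B A)

end Spectral

section Paths

variable (G : SimpleGraph V)

/-- The first `g+1` vertices of a length-`(g+1)` directed path. -/
def initP {g : ℕ} (p : DiPath G (g+1)) : DiPath G g :=
  ⟨Fin.init p.1, fun i j h => Fin.castSucc_injective _ (p.2.1 h), fun k => by
    show G.Adj (p.1 k.castSucc.castSucc) (p.1 k.succ.castSucc)
    rw [← Fin.succ_castSucc]
    exact p.2.2 k.castSucc⟩

/-- The last `g+1` vertices of a length-`(g+1)` directed path. -/
def tailP {g : ℕ} (p : DiPath G (g+1)) : DiPath G g :=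
  ⟨Fin.tail p.1, fun i j h => Fin.succ_injective _ (p.2.1 h), fun k => by
    show G.Adj (p.1 k.castSucc.succ) (p.1 k.succ.succ)
    rw [Fin.succ_castSucc]
    exact p.2.2 k.succ⟩

variable [DecidableRel G.Adj]

/-- The adjacency matrix of the line digraph `L(G^(g))` on the length-`(g+1)` paths. -/
def lineM (g : ℕ) : Matrix (DiPath G (g+1)) (DiPath G (g+1)) ℂ :=
  fun p q => if tailP G p = initP G q then 1 else 0

def Smat (g : ℕ) : Matrix (DiPath G (g+1)) (DiPath G g) ℂ :=
  fun p a => if tailP G p = a then 1 else 0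

def Tmat (g : ℕ) : Matrix (DiPath G g) (DiPath G (g+1)) ℂ :=
  fun a p => if initP G p = a then 1 else 0

lemma S_mul_T (g : ℕ) : Smat G g * Tmat G g = lineM G g := by
  ext p q
  simp only [Matrix.mul_apply, Smat, Tmat, lineM]
  have h : ∀ a : DiPath G g,
      (if tailP G p = a then (1:ℂ) else 0) * (if initP G q = a then 1 else 0)
      = if tailP G p = a then (if initP G q = tailP G p then (1:ℂ) else 0) else 0 := by
    intro a
    by_cases h : tailP G p = a
    · subst h; simp
    · simp [h]
  rw [Finset.sum_congr rfl fun a _ => h a, Finset.sum_ite_eq]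
  simp [eq_comm]

lemma T_mul_S (g : ℕ) : Tmat G g * Smat G g = NBM G g := by
  ext a b
  simp only [Matrix.mul_apply, Tmat, Smat, NBM]
  have hterm : ∀ p : DiPath G (g+1),
      (if initP G p = a then (1:ℂ) else 0) * (if tailP G p = b then 1 else 0)
      = if initP G p = a ∧ tailP G p = b then 1 else 0 := by
    intro p
    by_cases h1 : initP G p = a <;> by_cases h2 : tailP G p = b <;> simp [h1, h2]
  rw [Finset.sum_congr rfl fun p _ => hterm p]
  -- structure of any `p` with `initP p = a` and `tailP p = b`
  have hmem : ∀ p : DiPath G (g+1), initP G p = a → tailP G p = b →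
      (∀ k : Fin g, b.1 k.castSucc = a.1 k.succ) ∧
        p.1 = Fin.snoc a.1 (b.1 (Fin.last g)) := by
    intro p h1 h2
    have ha : a.1 = Fin.init p.1 := (congrArg Subtype.val h1).symm
    have hb : b.1 = Fin.tail p.1 := (congrArg Subtype.val h2).symm
    constructor
    · intro k
      rw [ha, hb]
      show p.1 k.castSucc.succ = p.1 k.succ.castSucc
      rw [Fin.succ_castSucc]
    · have hlast : b.1 (Fin.last g) = p.1 (Fin.last (g+1)) := by
        rw [hb]; show p.1 (Fin.last g).succ = _; rw [Fin.succ_last]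
      rw [ha, hlast, Fin.snoc_init_self]
  by_cases hc : (∀ k : Fin g, b.1 k.castSucc = a.1 k.succ) ∧
      IsDiPath G (g+1) (Fin.snoc a.1 (b.1 (Fin.last g)))
  · rw [if_pos hc]
    obtain ⟨hc1, hc2⟩ := hc
    have hiff : ∀ p : DiPath G (g+1),
        (initP G p = a ∧ tailP G p = b) ↔ p = ⟨Fin.snoc a.1 (b.1 (Fin.last g)), hc2⟩ := by
      intro p
      constructor
      · rintro ⟨h1, h2⟩
        exact Subtype.ext ((hmem p h1 h2).2)
      · rintro rfl
        refine ⟨Subtype.ext (funext fun k => ?_), Subtype.ext (funext fun k => ?_)⟩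
        · show (Fin.snoc a.1 (b.1 (Fin.last g)) : Fin (g+2) → V) k.castSucc = a.1 k
          rw [Fin.snoc_castSucc]
        show (Fin.snoc a.1 (b.1 (Fin.last g)) : Fin (g+2) → V) k.succ = b.1 k
        refine Fin.lastCases ?_ (fun j => ?_) k
        · rw [Fin.succ_last, Fin.snoc_last]
        · rw [Fin.succ_castSucc, Fin.snoc_castSucc]
          exact (hc1 j).symm
    calc (∑ p : DiPath G (g+1), if initP G p = a ∧ tailP G p = b then (1:ℂ) else 0)
        = ∑ p : DiPath G (g+1),
            if p = ⟨Fin.snoc a.1 (b.1 (Fin.last g)), hc2⟩ then (1:ℂ) else 0 :=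
          Finset.sum_congr rfl fun p _ => if_congr (hiff p) rfl rfl
      _ = 1 := by
          rw [Finset.sum_ite_eq' Finset.univ _ (fun _ => (1:ℂ))]
          simp
  · rw [if_neg hc]
    refine Finset.sum_eq_zero fun p _ => if_neg ?_
    rintro ⟨h1, h2⟩
    obtain ⟨hk, hp⟩ := hmem p h1 h2
    exact hc ⟨hk, hp ▸ p.2⟩

/-- If `G` has no simple cycle of length `m+3`, then `B^{(m+2)}` coincides with the
adjacency matrix of the line digraph of `G^{(m+1)}`. -/
lemma nbm_eq_lineM (m : ℕ)
    (hcyc : ∀ c : Fin (m+3) → V, ¬ IsSimpleCycle G (m+3) c) :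
    NBM G (m+2) = lineM G (m+1) := by
  ext p q
  simp only [NBM, lineM]
  congr 1
  apply propext
  constructor
  · rintro ⟨h1, _⟩
    exact Subtype.ext (funext fun k => (h1 k).symm)
  · intro heq
    have h1 : ∀ k : Fin (m+2), q.1 k.castSucc = p.1 k.succ := by
      intro k
      exact (congrFun (congrArg Subtype.val heq) k).symm
    refine ⟨h1, ?_⟩
    set v : V := q.1 (Fin.last (m+2)) with hv
    have hadj_last : G.Adj (p.1 (Fin.last (m+2))) v := by
      have h2 := q.2.2 (Fin.last (m+1))
      rw [h1 (Fin.last (m+1)), Fin.succ_last] at h2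
      exact h2
    have hx : ∀ i : Fin (m+3), p.1 i ≠ v := by
      intro i hi
      rcases eq_or_ne i 0 with rfl | hne
      · -- `p` would close into a simple cycle of length `m+3`
        have hstep : ∀ i j : Fin (m+3), (j : ℕ) = (i : ℕ) + 1 → G.Adj (p.1 i) (p.1 j) := by
          intro i j hij
          have hi2 : (i : ℕ) < m + 2 := by have := j.isLt; omega
          have h1' : i = (⟨i, hi2⟩ : Fin (m+2)).castSucc := Fin.ext rfl
          have h2' : j = (⟨i, hi2⟩ : Fin (m+2)).succ := Fin.ext hij
          rw [h1', h2']
          exact p.2.2 _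
        refine hcyc p.1 ⟨by omega, p.2.1, fun t => ?_⟩
        rcases Nat.lt_or_ge t.val (m+2) with ht | ht
        · exact hstep _ _ (Nat.mod_eq_of_lt (by omega))
        · have htl : t = Fin.last (m+2) := Fin.ext (by have := t.isLt; show t.val = m + 2; omega)
          subst htl
          convert hadj_last using 1
          rw [← hi]
          refine congrArg p.1 (Fin.ext ?_)
          simp only [Fin.val_zero, Fin.val_last]
          exact Nat.mod_self (m+3)
        -- done with cycle branch
      · obtain ⟨j, rfl⟩ := Fin.eq_succ_of_ne_zero hne
        rw [← h1 j] at hi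
        have h3 := q.2.1 (hi.trans hv)
        exact (Fin.castSucc_lt_last j).ne h3
    constructor
    · -- injectivity of the extended tuple
      intro i j h
      rcases Fin.eq_castSucc_or_eq_last i with ⟨i', rfl⟩ | rfl <;>
        rcases Fin.eq_castSucc_or_eq_last j with ⟨j', rfl⟩ | rfl
      · rw [Fin.snoc_castSucc, Fin.snoc_castSucc] at h
        exact congrArg Fin.castSucc (p.2.1 h)
      · rw [Fin.snoc_castSucc, Fin.snoc_last] at h
        exact absurd h (hx i')
      · rw [Fin.snoc_last, Fin.snoc_castSucc] at h
        exact absurd h.symm (hx j')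
      · rfl
    · -- adjacency along the extended tuple
      intro k
      refine Fin.lastCases ?_ (fun j => ?_) k
      · rw [Fin.succ_last, Fin.snoc_last, Fin.snoc_castSucc]
        exact hadj_last
      · rw [Fin.succ_castSucc, Fin.snoc_castSucc, Fin.snoc_castSucc]
        exact p.2.2 j

end Paths

/-- **Theorem 1(iii).** If `ℓ ≥ 3` and `G` has no simple cycle of length exactly `ℓ`, then
`ρ(B^(ℓ-2)) = ρ(B^(ℓ-1))`. -/
theorem nbm_specRad_eq_of_no_cycle (G : SimpleGraph V) [DecidableRel G.Adj] (l : ℕ)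
    (hl : 3 ≤ l) (hcyc : ∀ c : Fin l → V, ¬ IsSimpleCycle G l c) :
    specRad (NBM G (l - 2)) = specRad (NBM G (l - 1)) := by
  obtain ⟨m, rfl⟩ : ∃ m, l = m + 3 := ⟨l - 3, by omega⟩
  show specRad (NBM G (m+1)) = specRad (NBM G (m+2))
  rw [specRad, specRad, ← T_mul_S G (m+1), nbm_eq_lineM G m hcyc, ← S_mul_T G (m+1)]
  exact (spectralRadius_mul_comm _ _).symm

end PercNB
end

section
/- (Corollary of Theorem 1(i)) For every integer g ≥ 0, the spectral radius of the g-th-order non-backtracking matrix is at most the spectral radius of the adjacency matrix: ρ(B^(g)) ≤ ρ(A). -/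
open Matrix ENNReal

namespace PercNB

variable {V : Type*} [Fintype V] [DecidableEq V]

/-!
The last-vertex map `p ↦ p (g+1)` sends arcs of the digraph behind `B^(g)` to edges of `G` and
is injective on every out-neighbourhood. With `S` the 0/1 matrix of this map this says
`B^(g) S ≤ S A` entrywise, hence `(B^(g))^k S ≤ S A^k`; since `S` is row-stochastic, every row
sum of `(B^(g))^k` is at most the largest row sum of `A^k`. So `‖(B^(g))^k‖∞ ≤ ‖A^k‖∞` for all
`k`, and Gelfand's formula gives `ρ(B^(g)) ≤ ρ(A)`.
-/

open scoped NNReal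

theorem spectralRadius_le_of_nnnorm_pow_le {A B : Type*} [NormedRing A] [NormedAlgebra ℂ A]
    [CompleteSpace A] [NormedRing B] [NormedAlgebra ℂ B] [CompleteSpace B] {a : A} {b : B}
    (h : ∀ n : ℕ, ‖a ^ n‖₊ ≤ ‖b ^ n‖₊) : spectralRadius ℂ a ≤ spectralRadius ℂ b :=
  le_of_tendsto_of_tendsto' (spectrum.pow_nnnorm_pow_one_div_tendsto_nhds_spectralRadius a)
    (spectrum.pow_nnnorm_pow_one_div_tendsto_nhds_spectralRadius b) fun n =>
      ENNReal.rpow_le_rpow (ENNReal.coe_le_coe.2 (h n)) (by positivity)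

section NonnegMatrix

variable {ι κ μ : Type*}

theorem mul_apply_mono [Fintype κ] {X X' : Matrix ι κ ℝ≥0} {Y Y' : Matrix κ μ ℝ≥0}
    (hX : ∀ i j, X i j ≤ X' i j) (hY : ∀ i j, Y i j ≤ Y' i j) (i : ι) (j : μ) :
    (X * Y) i j ≤ (X' * Y') i j :=
  Finset.sum_le_sum fun k _ => mul_le_mul' (hX i k) (hY k j)

variable [Fintype κ] {S : Matrix ι κ ℝ≥0}

theorem mulVec_apply_le_sup (hS : S *ᵥ 1 = 1) (v : κ → ℝ≥0) (i : ι) :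
    (S *ᵥ v) i ≤ Finset.univ.sup v :=
  calc (S *ᵥ v) i ≤ (S *ᵥ fun _ => Finset.univ.sup v) i :=
        Finset.sum_le_sum fun j _ => mul_le_mul_right (Finset.le_sup (Finset.mem_univ j)) _
    _ = Finset.univ.sup v := by
        have hSi := congr_fun hS i
        simp only [mulVec, dotProduct, Pi.one_apply, mul_one] at hSi
        simp only [mulVec, dotProduct, ← Finset.sum_mul, hSi, one_mul]

variable [Fintype ι]

attribute [local instance] Matrix.linftyOpNormedAddCommGroup Matrix.linftyOpNormedRing
  Matrix.linftyOpNormedAlgebra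

theorem linfty_opNNNorm_map_algebraMap (X : Matrix ι κ ℝ≥0) :
    ‖X.map (algebraMap ℝ≥0 ℂ)‖₊ = Finset.univ.sup (X *ᵥ 1) := by
  rw [linfty_opNNNorm_def]
  congr 1
  ext i
  simp [mulVec, dotProduct]

variable [DecidableEq ι] [DecidableEq κ] {M : Matrix ι ι ℝ≥0} {N : Matrix κ κ ℝ≥0}

theorem pow_mul_apply_le_mul_pow_apply (h : ∀ i j, (M * S) i j ≤ (S * N) i j) (k : ℕ)
    (i : ι) (j : κ) : (M ^ k * S) i j ≤ (S * N ^ k) i j := by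
  induction k generalizing i j with
  | zero => simp
  | succ k ih =>
    calc (M ^ (k + 1) * S) i j = (M * (M ^ k * S)) i j := by rw [pow_succ', Matrix.mul_assoc]
      _ ≤ (M * (S * N ^ k)) i j := mul_apply_mono (fun _ _ => le_rfl) ih i j
      _ = (M * S * N ^ k) i j := by rw [Matrix.mul_assoc]
      _ ≤ (S * N * N ^ k) i j := mul_apply_mono h (fun _ _ => le_rfl) i j
      _ = (S * N ^ (k + 1)) i j := by rw [Matrix.mul_assoc, ← pow_succ']

theorem pow_mulVec_one_le_sup (hS : S *ᵥ 1 = 1) (h : ∀ i j, (M * S) i j ≤ (S * N) i j)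
    (k : ℕ) (i : ι) : (M ^ k *ᵥ 1) i ≤ Finset.univ.sup (N ^ k *ᵥ 1) :=
  calc (M ^ k *ᵥ 1) i = ((M ^ k * S) *ᵥ 1) i := by rw [← mulVec_mulVec, hS]
    _ ≤ ((S * N ^ k) *ᵥ 1) i :=
        Finset.sum_le_sum fun j _ => mul_le_mul_left (pow_mul_apply_le_mul_pow_apply h k i j) _
    _ = (S *ᵥ (N ^ k *ᵥ 1)) i := by rw [mulVec_mulVec]
    _ ≤ Finset.univ.sup (N ^ k *ᵥ 1) := mulVec_apply_le_sup hS _ i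

theorem specRad_map_le_of_mul_le (hS : S *ᵥ 1 = 1) (h : ∀ i j, (M * S) i j ≤ (S * N) i j) :
    specRad (M.map (algebraMap ℝ≥0 ℂ)) ≤ specRad (N.map (algebraMap ℝ≥0 ℂ)) := by
  refine spectralRadius_le_of_nnnorm_pow_le fun k => ?_
  rw [← Matrix.map_pow, ← Matrix.map_pow, linfty_opNNNorm_map_algebraMap,
    linfty_opNNNorm_map_algebraMap]
  exact Finset.sup_le fun i _ => pow_mulVec_one_le_sup hS h k i

end NonnegMatrix

section ArcMatrix

variable {α β : Type*}

def arcMatrix (R : Type*) [Zero R] [One R] (r : α → α → Prop) [DecidableRel r] :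
    Matrix α α R :=
  of fun a b => if r a b then 1 else 0

theorem map_arcMatrix {R R' : Type*} [NonAssocSemiring R] [NonAssocSemiring R'] (f : R →+* R')
    (r : α → α → Prop) [DecidableRel r] : (arcMatrix R r).map f = arcMatrix R' r := by
  ext a b
  simp [arcMatrix, apply_ite f]

theorem specRad_arcMatrix_le_of_locallyInjective [Fintype α] [DecidableEq α] [Fintype β]
    [DecidableEq β] {r : α → α → Prop} {s : β → β → Prop} [DecidableRel r] [DecidableRel s]
    (f : α → β) (hom : ∀ a b, r a b → s (f a) (f b))
    (inj : ∀ a b b', r a b → r a b' → f b = f b' → b = b') :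
    specRad (arcMatrix ℂ r) ≤ specRad (arcMatrix ℂ s) := by
  rw [← map_arcMatrix (algebraMap ℝ≥0 ℂ), ← map_arcMatrix (algebraMap ℝ≥0 ℂ)]
  refine specRad_map_le_of_mul_le (S := (1 : Matrix β β ℝ≥0).submatrix f id) ?_ fun a b => ?_
  · ext a
    simp [mulVec, dotProduct, one_apply]
  · have hlhs : (arcMatrix ℝ≥0 r * (1 : Matrix β β ℝ≥0).submatrix f id) a b
        = (Finset.univ.filter fun a' => r a a' ∧ f a' = b).card := by
      simp only [mul_apply, arcMatrix, of_apply, submatrix_apply, id, one_apply, ite_mul,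
        one_mul, zero_mul, ← ite_and, Finset.sum_boole]
    have hrhs : ((1 : Matrix β β ℝ≥0).submatrix f id * arcMatrix ℝ≥0 s) a b
        = if s (f a) b then 1 else 0 := by
      simp only [mul_apply, submatrix_apply, id, one_apply, ite_mul, one_mul, zero_mul,
        Finset.sum_ite_eq, Finset.mem_univ, if_true, arcMatrix, of_apply]
    rw [hlhs, hrhs]
    split_ifs with hab
    · exact_mod_cast Finset.card_le_one.2 fun x hx y hy => by
        simp only [Finset.mem_filter, Finset.mem_univ, true_and] at hx hy
        exact inj a x y hx.1 hy.1 (hx.2.trans hy.2.symm)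
    · simp only [nonpos_iff_eq_zero, Nat.cast_eq_zero, Finset.card_eq_zero,
        Finset.filter_eq_empty_iff]
      rintro a' - ⟨ha', rfl⟩
      exact hab (hom a a' ha')

end ArcMatrix

instance (G : SimpleGraph V) [DecidableRel G.Adj] (g : ℕ) : DecidableRel (NBArc G g) :=
  fun _ _ => inferInstanceAs (Decidable (_ ∧ _))

omit [Fintype V] [DecidableEq V] in
theorem NBArc.adj_last {G : SimpleGraph V} {g : ℕ} {p q : DiPath G g} (h : NBArc G g p q) :
    G.Adj (p.1 (Fin.last g)) (q.1 (Fin.last g)) := by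
  simpa using h.2.2 (Fin.last g)

omit [Fintype V] [DecidableEq V] in
theorem LineArc.eq_of_last_eq {G : SimpleGraph V} {g : ℕ} {p q q' : DiPath G g}
    (h : LineArc G g p q) (h' : LineArc G g p q') (hlast : q.1 (Fin.last g) = q'.1 (Fin.last g)) :
    q = q' := by
  refine Subtype.ext (funext fun i => ?_)
  induction i using Fin.lastCases with
  | last => exact hlast
  | cast k => rw [h k, h' k]

/-- **Corollary of Theorem 1(i).** For every `g ≥ 0`, `ρ(B^(g)) ≤ ρ(A)`. -/
theorem nbm_specRad_le_adj (G : SimpleGraph V) [DecidableRel G.Adj] (g : ℕ) :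
    specRad (NBM G g) ≤ specRad (G.adjMatrix ℂ) :=
  -- `NBM G g` and `G.adjMatrix ℂ` are `arcMatrix ℂ (NBArc G g)` and `arcMatrix ℂ G.Adj` by `rfl`.
  specRad_arcMatrix_le_of_locallyInjective (fun p => p.1 (Fin.last g))
    (fun _ _ => NBArc.adj_last) fun _ _ _ h h' => LineArc.eq_of_last_eq h.1 h'.1

end PercNB
end

section
/- (Theorem 2, part (i)) Every nonzero complex eigenvalue λ of the 2nd-order non-backtracking matrix B^(2) of G is also an eigenvalue of the matrix M. -/
/-!
An eigenvector `ψ` of `B^(2)` with eigenvalue `λ ≠ 0` satisfies `λ ψ_{ijk} = Σ_{l ≠ i} ψ_{jkl}`.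
Summing this over `k`, after combining it on a triangle `i j k` at its three rotations, shows
that `x = xvec ψ` solves `P(λ) x = 0` for the matrix polynomial
`P(λ) = λ⁴ − λ³B + λ²ΔB₂ − λ(D_Δ − I) − (B − ΔB₁)`, of which `M` is the companion
linearization; so `(x, λ⁻¹x, λ⁻²x, λ⁻³x)` is an eigenvector of `M` when `x ≠ 0`.
If `x = 0`, the same relations give `(λ³ + 1) ψ = 0`, so `λ³ = −1`, and then
`x_{(u,v)} = f(u) − λ² f(v)` solves `P(λ) x = 0` for every `f : V → ℂ`.
-/

open Matrix ENNReal

namespace PercNB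

variable {V : Type*} [Fintype V] [DecidableEq V]

section Spectrum

variable {K n : Type*} [Field K] [Fintype n] [DecidableEq n]

omit [Fintype V] [DecidableEq V] in
theorem _root_.Matrix.exists_mulVec_eq_smul_of_mem_spectrum {A : Matrix n n K} {μ : K}
    (h : μ ∈ spectrum K A) : ∃ v ≠ 0, A *ᵥ v = μ • v := by
  rw [← Matrix.spectrum_toLin', ← Module.End.hasEigenvalue_iff_mem_spectrum] at h
  obtain ⟨v, hv, hv0⟩ := h.exists_hasEigenvector
  exact ⟨v, hv0, by simpa using Module.End.mem_eigenspace_iff.1 hv⟩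

omit [Fintype V] [DecidableEq V] in
theorem _root_.Matrix.mem_spectrum_of_mulVec_eq_smul {A : Matrix n n K} {μ : K} {v : n → K}
    (hv : v ≠ 0) (h : A *ᵥ v = μ • v) : μ ∈ spectrum K A := by
  rw [← Matrix.spectrum_toLin', ← Module.End.hasEigenvalue_iff_mem_spectrum]
  exact Module.End.hasEigenvalue_of_hasEigenvector ⟨by simpa using h, hv⟩

end Spectrum

variable {G : SimpleGraph V}

omit [Fintype V] [DecidableEq V] in
theorem isDiPath_snoc_iff {g : ℕ} {p : Fin (g + 1) → V} {v : V} :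
    IsDiPath G (g + 1) (Fin.snoc p v) ↔
      IsDiPath G g p ∧ G.Adj (p (Fin.last g)) v ∧ v ∉ Set.range p := by
  simp only [IsDiPath, Fin.snoc_injective_iff, Fin.forall_fin_succ' (n := g), Fin.succ_castSucc,
    Fin.snoc_castSucc, Fin.succ_last, Fin.snoc_last]
  tauto

omit [Fintype V] [DecidableEq V] in
theorem isDiPath_two_iff {f : Fin 3 → V} :
    IsDiPath G 2 f ↔ G.Adj (f 0) (f 1) ∧ G.Adj (f 1) (f 2) ∧ f 0 ≠ f 2 := by
  rw [IsDiPath, Fin.forall_fin_two, Function.Injective]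
  simp only [Fin.forall_fin_succ]
  grind [SimpleGraph.Adj.ne]

omit [Fintype V] [DecidableEq V] in
theorem blockVec_ne_zero {lam : ℂ} {x : DiEdge G → ℂ} (hx : x ≠ 0) : blockVec lam x ≠ 0 :=
  fun h => hx (funext fun e => by simpa [blockVec] using congrFun h (.inl (.inl e)))

variable [DecidableRel G.Adj]

noncomputable def quarticMatrix (G : SimpleGraph V) [DecidableRel G.Adj] (lam : ℂ) :
    Matrix (DiEdge G) (DiEdge G) ℂ :=
  lam ^ 4 • 1 - lam ^ 3 • Bmat G + lam ^ 2 • dB2 G - lam • (Ddel G - 1) - (Bmat G - dB1 G)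

theorem quarticMatrix_mulVec_apply (lam : ℂ) (x : DiEdge G → ℂ) (e : DiEdge G) :
    (quarticMatrix G lam *ᵥ x) e = (lam ^ 4 + lam) * x e - (lam ^ 3 + 1) * (Bmat G *ᵥ x) e
      + lam ^ 2 * (dB2 G *ᵥ x) e - lam * (Ddel G *ᵥ x) e + (dB1 G *ᵥ x) e := by
  simp only [quarticMatrix, add_mulVec, sub_mulVec, smul_mulVec, one_mulVec, Pi.add_apply,
    Pi.sub_apply, Pi.smul_apply, smul_eq_mul]
  ring

theorem Mmat_mulVec_blockVec {lam : ℂ} (h0 : lam ≠ 0) {x : DiEdge G → ℂ}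
    (hx : quarticMatrix G lam *ᵥ x = 0) :
    Mmat G *ᵥ blockVec lam x = lam • blockVec lam x := by
  have hrow (e : DiEdge G) := congrFun hx e
  simp only [quarticMatrix_mulVec_apply, Pi.zero_apply] at hrow
  funext s
  rcases s with (e | e) | (e | e) <;>
    simp only [Mmat, blockVec, fromBlocks_mulVec, Sum.elim_comp_inl, Sum.elim_comp_inr,
      mulVec_smul, neg_mulVec, sub_mulVec, one_mulVec, zero_mulVec, smul_neg, smul_zero, add_zero,
      zero_add, Sum.elim_inl, Sum.elim_inr, Pi.add_apply, Pi.neg_apply, Pi.sub_apply,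
      Pi.zero_apply, Pi.smul_apply, smul_eq_mul] <;>
    field_simp
  linear_combination -hrow e

theorem mem_spectrum_Mmat {lam : ℂ} (h0 : lam ≠ 0) {x : DiEdge G → ℂ} (hx0 : x ≠ 0)
    (hx : quarticMatrix G lam *ᵥ x = 0) : lam ∈ spectrum ℂ (Mmat G) :=
  Matrix.mem_spectrum_of_mulVec_eq_smul (blockVec_ne_zero hx0) (Mmat_mulVec_blockVec h0 hx)

omit [DecidableEq V] in
theorem sum_diEdge {M : Type*} [AddCommMonoid M] (H : DiEdge G → M) :
    ∑ f, H f = ∑ a, ∑ b, if h : G.Adj a b then H ⟨(a, b), h⟩ else 0 := by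
  rw [← Fintype.sum_prod_type']
  exact Fintype.sum_of_injective Subtype.val Subtype.val_injective _ _
    (fun e he => dif_neg fun h => he ⟨⟨e, h⟩, rfl⟩) (fun f => by simp [f.2])

omit [DecidableEq V] in
theorem sum_diEdge_of_fst {M : Type*} [AddCommMonoid M] (j : V) (H : DiEdge G → M)
    (hH : ∀ f, f.1.1 ≠ j → H f = 0) :
    ∑ f, H f = ∑ k, if h : G.Adj j k then H ⟨(j, k), h⟩ else 0 := by
  rw [sum_diEdge, Finset.sum_eq_single j (by simp +contextual [hH]) (by simp)]

omit [DecidableEq V] in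
theorem sum_diEdge_of_snd {M : Type*} [AddCommMonoid M] (i : V) (H : DiEdge G → M)
    (hH : ∀ f, f.1.2 ≠ i → H f = 0) :
    ∑ f, H f = ∑ k, if h : G.Adj k i then H ⟨(k, i), h⟩ else 0 := by
  rw [sum_diEdge]
  exact Finset.sum_congr rfl fun a _ =>
    Finset.sum_eq_single i (by simp +contextual [hH]) (by simp)

section EdgeFunction

variable (F : V → V → ℂ) (e : DiEdge G)

theorem Bmat_mulVec_apply : (Bmat G *ᵥ fun f => F f.1.1 f.1.2) e =
    ∑ k, if G.Adj e.1.2 k ∧ k ≠ e.1.1 then F e.1.2 k else 0 := by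
  rw [mulVec, dotProduct, sum_diEdge_of_fst e.1.2 _ fun f hf => by simp [Bmat, Ne.symm hf]]
  simp only [Bmat, dite_eq_ite]
  exact Finset.sum_congr rfl fun k _ => by grind [SimpleGraph.irrefl]

theorem dB1_mulVec_apply : (dB1 G *ᵥ fun f => F f.1.1 f.1.2) e =
    ∑ k, if G.Adj e.1.1 k ∧ G.Adj e.1.2 k then F e.1.2 k else 0 := by
  rw [mulVec, dotProduct, sum_diEdge_of_fst e.1.2 _ fun f hf => by simp [dB1, Ne.symm hf]]
  simp only [dB1, dite_eq_ite]
  exact Finset.sum_congr rfl fun k _ => by grind [SimpleGraph.irrefl]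

theorem dB2_mulVec_apply : (dB2 G *ᵥ fun f => F f.1.1 f.1.2) e =
    ∑ k, if G.Adj e.1.1 k ∧ G.Adj e.1.2 k then F k e.1.1 else 0 := by
  rw [mulVec, dotProduct, sum_diEdge_of_snd e.1.1 _ fun f hf => by simp [dB2, hf]]
  simp only [dB2, dite_eq_ite]
  exact Finset.sum_congr rfl fun k _ => by grind [SimpleGraph.adj_comm]

theorem Ddel_mulVec_apply : (Ddel G *ᵥ fun f => F f.1.1 f.1.2) e =
    ∑ k, if G.Adj e.1.1 k ∧ G.Adj e.1.2 k then F e.1.1 e.1.2 else 0 := by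
  rw [Ddel, mulVec_diagonal, ← Finset.sum_filter, Finset.sum_const, nsmul_eq_mul]

end EdgeFunction

omit [Fintype V] in
theorem NBM_two_apply (p q : DiPath G 2) :
    NBM G 2 p q = if q.1 0 = p.1 1 ∧ q.1 1 = p.1 2 ∧ q.1 2 ≠ p.1 0 then 1 else 0 := by
  have h20 : q.1 2 ≠ q.1 0 := q.2.1.ne (by decide)
  have h21 : q.1 2 ≠ q.1 1 := q.2.1.ne (by decide)
  have hq := isDiPath_two_iff.1 q.2
  refine if_congr ?_ rfl rfl
  rw [isDiPath_snoc_iff, Fin.forall_fin_two, Set.mem_range, Fin.exists_fin_succ,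
    Fin.exists_fin_two]
  grind

noncomputable def psiExt (ψ : DiPath G 2 → ℂ) (a b c : V) : ℂ :=
  if h : IsDiPath G 2 ![a, b, c] then ψ ⟨_, h⟩ else 0

noncomputable def psiExtSum (ψ : DiPath G 2 → ℂ) (a b : V) : ℂ := ∑ c, psiExt ψ a b c

variable (ψ : DiPath G 2 → ℂ)

omit [Fintype V] in
theorem psiExt_apply_val (p : DiPath G 2) : psiExt ψ (p.1 0) (p.1 1) (p.1 2) = ψ p := by
  have hp : ![p.1 0, p.1 1, p.1 2] = p.1 := by ext i; fin_cases i <;> rfl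
  simp only [psiExt, hp, p.2, dite_true]

omit [Fintype V] in
theorem psiExt_eq_zero {a b c : V} (h : ¬(G.Adj a b ∧ G.Adj b c ∧ a ≠ c)) :
    psiExt ψ a b c = 0 :=
  dif_neg fun hp => h (by simpa using isDiPath_two_iff.1 hp)

theorem sum_diPath_two (F : V → V → V → ℂ) :
    ∑ q : DiPath G 2, F (q.1 0) (q.1 1) (q.1 2) * ψ q =
      ∑ a, ∑ b, ∑ c, F a b c * psiExt ψ a b c := by
  simp only [← Fintype.sum_prod_type']
  refine Fintype.sum_of_injective (fun q => (q.1 0, q.1 1, q.1 2)) ?_ _ _ ?_ ?_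
  · intro q q' h
    simp only [Prod.mk.injEq] at h
    ext i
    fin_cases i <;> simp [h.1, h.2.1, h.2.2]
  · rintro ⟨a, b, c⟩ h
    rw [psiExt, dif_neg fun hp => h ⟨⟨_, hp⟩, rfl⟩, mul_zero]
  · intro q
    rw [psiExt_apply_val]

theorem xvec_eq_psiExtSum (e : DiEdge G) : xvec G ψ e = psiExtSum ψ e.1.1 e.1.2 := by
  have h := sum_diPath_two ψ fun a b _ => if a = e.1.1 ∧ b = e.1.2 then 1 else 0
  simp only [ite_mul, one_mul, zero_mul] at h
  rw [xvec, Finset.sum_filter, h]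
  simp [psiExtSum, ite_and]

section Eigenvector

variable {ψ} {lam : ℂ} (hψ : NBM G 2 *ᵥ ψ = lam • ψ)
include hψ

theorem psiExt_eigen {a b c : V} (hab : G.Adj a b) (hbc : G.Adj b c) (hac : a ≠ c) :
    lam * psiExt ψ a b c = psiExtSum ψ b c - psiExt ψ b c a := by
  set p : DiPath G 2 := ⟨![a, b, c], isDiPath_two_iff.2 ⟨hab, hbc, hac⟩⟩
  have h := congrFun hψ p
  simp only [mulVec, dotProduct, NBM_two_apply, Pi.smul_apply, smul_eq_mul] at h
  rw [sum_diPath_two ψ fun a' b' c' => if a' = p.1 1 ∧ b' = p.1 2 ∧ c' ≠ p.1 0 then 1 else 0,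
    ← psiExt_apply_val ψ p] at h
  refine h.symm.trans ?_
  simp only [ite_mul, one_mul, zero_mul, ite_and, Finset.sum_ite_irrel, Finset.sum_const_zero,
    Finset.sum_ite_eq', Finset.mem_univ, if_true]
  change (∑ x, if x ≠ a then psiExt ψ b c x else 0) = _
  rw [psiExtSum, ← Finset.sum_filter, Finset.filter_ne', Finset.sum_erase_eq_sub (Finset.mem_univ a)]

theorem psiExt_quartic_relation {i j : V} (hij : G.Adj i j) (k : V) :
    lam * (lam ^ 3 + 1) * psiExt ψ i j k =
      (lam ^ 3 + 1) * (if G.Adj j k ∧ k ≠ i then psiExtSum ψ j k else 0)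
        - lam ^ 2 * (if G.Adj i k ∧ G.Adj j k then psiExtSum ψ k i else 0)
        + lam * (if G.Adj i k ∧ G.Adj j k then psiExtSum ψ i j else 0)
        - (if G.Adj i k ∧ G.Adj j k then psiExtSum ψ j k else 0) := by
  by_cases hjk : G.Adj j k ∧ k ≠ i
  · obtain ⟨hjk, hki⟩ := hjk
    have e1 := psiExt_eigen hψ hij hjk hki.symm
    by_cases hik : G.Adj i k
    · have e2 := psiExt_eigen hψ hjk hik.symm hij.ne'
      have e3 := psiExt_eigen hψ hik.symm hij hjk.ne'
      simp only [hik, hjk, hki, ne_eq, not_false_eq_true, and_self, if_true]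
      linear_combination lam ^ 3 * e1 - lam ^ 2 * e2 + lam * e3
    · rw [psiExt_eq_zero ψ fun h => hik h.2.1.symm] at e1
      simp only [hik, hjk, hki, ne_eq, not_false_eq_true, and_self, if_true, false_and, if_false]
      linear_combination (lam ^ 3 + 1) * e1
  · have hik : ¬(G.Adj i k ∧ G.Adj j k) := fun h => hjk ⟨h.2, h.1.ne'⟩
    rw [psiExt_eq_zero ψ fun h => hjk ⟨h.2.1, h.2.2.symm⟩]
    simp only [hjk, hik, if_false]
    ring

theorem quarticMatrix_mulVec_xvec : quarticMatrix G lam *ᵥ xvec G ψ = 0 := by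
  have hx : xvec G ψ = fun f => psiExtSum ψ f.1.1 f.1.2 := funext (xvec_eq_psiExtSum ψ)
  funext e
  rw [quarticMatrix_mulVec_apply, hx, Bmat_mulVec_apply, dB2_mulVec_apply, Ddel_mulVec_apply,
    dB1_mulVec_apply, Pi.zero_apply]
  beta_reduce
  nth_rw 1 [psiExtSum]
  simp only [Finset.mul_sum, ← Finset.sum_sub_distrib, ← Finset.sum_add_distrib]
  exact Finset.sum_eq_zero fun k _ => by linear_combination psiExt_quartic_relation hψ e.2 k

theorem lam_cube_eq_neg_one_of_xvec_eq_zero (h0 : lam ≠ 0) (hψ0 : ψ ≠ 0) (hx : xvec G ψ = 0) :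
    lam ^ 3 = -1 := by
  have hX (a b : V) : psiExtSum ψ a b = 0 := by
    by_cases hab : G.Adj a b
    · exact (xvec_eq_psiExtSum ψ ⟨(a, b), hab⟩).symm.trans (congrFun hx _)
    · exact Finset.sum_eq_zero fun c _ => psiExt_eq_zero ψ fun h => hab h.1
  obtain ⟨p, hp⟩ := Function.ne_iff.1 hψ0
  have hq := psiExt_quartic_relation hψ (isDiPath_two_iff.1 p.2).1 (p.1 2)
  simp only [hX, ite_self, mul_zero, sub_zero, add_zero, psiExt_apply_val] at hq
  have := (mul_eq_zero.1 hq).resolve_right hp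
  linear_combination (mul_eq_zero.1 this).resolve_left h0

end Eigenvector

theorem quarticMatrix_mulVec_eq_zero_of_cube_eq_neg_one {lam : ℂ} (hl : lam ^ 3 = -1)
    (f : V → ℂ) : quarticMatrix G lam *ᵥ (fun e => f e.1.1 - lam ^ 2 * f e.1.2) = 0 := by
  funext e
  rw [quarticMatrix_mulVec_apply, Bmat_mulVec_apply (fun a b => f a - lam ^ 2 * f b),
    dB2_mulVec_apply (fun a b => f a - lam ^ 2 * f b),
    Ddel_mulVec_apply (fun a b => f a - lam ^ 2 * f b),
    dB1_mulVec_apply (fun a b => f a - lam ^ 2 * f b), Pi.zero_apply,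
    show lam ^ 4 + lam = 0 by linear_combination lam * hl,
    show lam ^ 3 + 1 = 0 by linear_combination hl]
  simp only [Finset.mul_sum, zero_mul, Finset.sum_const_zero, sub_zero, zero_add,
    ← Finset.sum_sub_distrib, ← Finset.sum_add_distrib]
  refine Finset.sum_eq_zero fun k _ => ?_
  split_ifs
  · linear_combination (f e.1.2 - lam * f e.1.1) * hl
  · ring

/-- **Theorem 2, part (i).** Every nonzero complex eigenvalue `λ` of the 2nd-order
non-backtracking matrix `B^(2)` of `G` is also an eigenvalue of the matrix `M`. -/
theorem mem_spectrum_M_of_mem_spectrum_nbm (G : SimpleGraph V) [DecidableRel G.Adj]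
    (lam : ℂ) (h0 : lam ≠ 0) (h : lam ∈ spectrum ℂ (NBM G 2)) :
    lam ∈ spectrum ℂ (Mmat G) := by
  obtain ⟨ψ, hψ0, hψ⟩ := Matrix.exists_mulVec_eq_smul_of_mem_spectrum h
  by_cases hx : xvec G ψ = 0
  · have hl := lam_cube_eq_neg_one_of_xvec_eq_zero hψ h0 hψ0 hx
    obtain ⟨p, -⟩ := Function.ne_iff.1 hψ0
    obtain ⟨hab, -, -⟩ := isDiPath_two_iff.1 p.2
    refine mem_spectrum_Mmat h0 (Function.ne_iff.2 ⟨⟨(p.1 0, p.1 1), hab⟩, ?_⟩)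
      (quarticMatrix_mulVec_eq_zero_of_cube_eq_neg_one hl (Pi.single (p.1 0) 1))
    simp [hab.ne']
  · exact mem_spectrum_Mmat h0 hx (quarticMatrix_mulVec_xvec hψ)

end PercNB
end
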